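/- arXiv:2404.15124 — 2 statements merged into one kernel-verified Lean document; each statement's English description precedes it below -/
import Mathlib

section
/- Let d ≥ 1 be an integer, γ ∈ (0,1), δ > 1, κ₁ > 0, and let θ and ε₁ > 0 satisfy (ε₁ + log 2)/(γ + γ/δ) < θ < log 2. Let ε₃ ∈ (0, min(θγ, δ ε₁)). Then there exists a constant c > 0 such that for every k ∈ ℕ, every u, v ∈ ( (1/2) e^{-(k+1)θ d}, (1/2) e^{-kθ d} ), and every r ∈ [0, √d · 2^{k+1}], one has e^{k d (min(θγ, δε₁) - ε₃)} · u^{-γ} · min(1, κ₁ v^{-γδ} (r + u^{-γ/d})^{-dδ}) ≥ c · e^{k d ε₃}. -/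
/-!
On the `k`-th layer, `u^{-γ} ≥ 2^γ e^{kdθγ}` and `v^{-γδ} ≥ 2^{γδ} e^{kdθγδ}`, while `θγ < log 2`
makes `r + u^{-γ/d} = O(2^k)`; hence the argument of the minimum is at least a constant times
`e^{kdδ(θγ - log 2)} ≤ 1`. The total exponent is `kd(m - ε₃ + θγ + δ(θγ - log 2))` with
`m = min(θγ, δε₁)`, and the ultrasmallness condition is exactly `θγ + δ(θγ - log 2) > δε₁ ≥ m`,
so the exponent exceeds `kd(2m - ε₃) ≥ kdε₃`.
-/

open Real

lemma min_one_mul_le_min_one_mul {B s : ℝ} (hs₀ : 0 ≤ s) (hs₁ : s ≤ 1) :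
    min 1 B * s ≤ min 1 (B * s) := by
  rw [min_mul_of_nonneg _ _ hs₀, one_mul]
  exact min_le_min_right _ hs₁

lemma mul_exp_rpow_neg_le_rpow_neg {y C a p : ℝ} (hy : 0 < y) (h : y ≤ C * exp a)
    (hp : 0 ≤ p) : C ^ (-p) * exp (-(a * p)) ≤ y ^ (-p) := by
  have hC : 0 ≤ C := nonneg_of_mul_nonneg_left (hy.le.trans h) (exp_pos a)
  calc C ^ (-p) * exp (-(a * p)) = (C * exp a) ^ (-p) := by
        rw [mul_rpow hC (exp_pos a).le, ← exp_mul, mul_neg]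
    _ ≤ y ^ (-p) := rpow_le_rpow_of_nonpos hy h (neg_nonpos.2 hp)

lemma rpow_neg_le_mul_exp_rpow_neg {y C a p : ℝ} (hC : 0 < C) (h : C * exp a ≤ y)
    (hp : 0 ≤ p) : y ^ (-p) ≤ C ^ (-p) * exp (-(a * p)) := by
  calc y ^ (-p) ≤ (C * exp a) ^ (-p) := rpow_le_rpow_of_nonpos (by positivity) h (neg_nonpos.2 hp)
    _ = C ^ (-p) * exp (-(a * p)) := by rw [mul_rpow hC.le (exp_pos a).le, ← exp_mul, mul_neg]

lemma two_pow_eq_exp (k : ℕ) : (2 : ℝ) ^ k = exp (k * log 2) := by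
  rw [exp_nat_mul, exp_log two_pos]

lemma ultrasmall_exponent {γ δ θ ε₁ : ℝ} (hγ : 0 < γ) (hδ : 0 < δ)
    (hθ : (ε₁ + log 2) / (γ + γ / δ) < θ) : δ * ε₁ < θ * γ + δ * (θ * γ - log 2) := by
  have h := (div_lt_iff₀ (by positivity)).1 hθ
  have hδθ : θ * (γ + γ / δ) * δ = θ * γ + δ * (θ * γ) := by field_simp; ring
  nlinarith

section Layer

variable {d k : ℕ} {γ θ u : ℝ}

lemma rpow_neg_div_le_of_mem_layer (hd : 1 ≤ d) (hγ₀ : 0 ≤ γ) (hγ₁ : γ ≤ 1)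
    (hθγ : θ * γ ≤ log 2) (hu : 1 / 2 * exp (-((k : ℝ) + 1) * θ * d) ≤ u) :
    u ^ (-(γ / d)) ≤ 4 * exp (k * log 2) := by
  have hd₀ : (0 : ℝ) < d := by exact_mod_cast hd
  have h2 : (1 / 2 : ℝ) ^ (-(γ / d)) ≤ 2 := by
    rw [one_div, inv_rpow zero_le_two, rpow_neg zero_le_two, inv_inv]
    calc (2 : ℝ) ^ (γ / d) ≤ 2 ^ (1 : ℝ) :=
          rpow_le_rpow_of_exponent_le one_le_two
            ((div_le_one hd₀).2 (hγ₁.trans (by exact_mod_cast hd)))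
      _ = 2 := rpow_one 2
  have hexp : exp (-(-((k : ℝ) + 1) * θ * d * (γ / d))) ≤ 2 * exp (k * log 2) := by
    calc exp (-(-((k : ℝ) + 1) * θ * d * (γ / d))) = exp ((k + 1) * (θ * γ)) := by
          congr 1; field_simp
      _ ≤ exp ((k + 1) * log 2) := exp_le_exp.2 (by gcongr)
      _ = 2 * exp (k * log 2) := by rw [add_one_mul, exp_add, exp_log two_pos, mul_comm]
  calc u ^ (-(γ / d)) ≤ (1 / 2) ^ (-(γ / d)) * exp (-(-((k : ℝ) + 1) * θ * d * (γ / d))) :=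
        rpow_neg_le_mul_exp_rpow_neg one_half_pos hu (by positivity)
    _ ≤ 2 * (2 * exp (k * log 2)) := by gcongr
    _ = 4 * exp (k * log 2) := by ring

lemma min_one_mul_exp_le_of_mem_layer {δ κ₁ v y C : ℝ} (hγ : 0 ≤ γ) (hδ : 0 ≤ δ)
    (hκ₁ : 0 < κ₁) (hθγ : θ * γ ≤ log 2) (hv₀ : 0 < v)
    (hv : v ≤ 1 / 2 * exp (-(k : ℝ) * θ * d)) (hy₀ : 0 < y) (hy : y ≤ C * exp (k * log 2)) :
    min 1 (κ₁ * (1 / 2) ^ (-(γ * δ)) * C ^ (-((d : ℝ) * δ))) *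
        exp (k * d * δ * (θ * γ - log 2)) ≤
      min 1 (κ₁ * v ^ (-(γ * δ)) * y ^ (-((d : ℝ) * δ))) := by
  have hC : 0 < C := pos_of_mul_pos_left (hy₀.trans_le hy) (exp_pos _).le
  have hexp : exp (k * d * δ * (θ * γ - log 2)) ≤ 1 :=
    exp_le_one_iff.2 (mul_nonpos_of_nonneg_of_nonpos (by positivity) (by linarith))
  refine (min_one_mul_le_min_one_mul (exp_pos _).le hexp).trans (min_le_min_left _ ?_)
  calc κ₁ * (1 / 2) ^ (-(γ * δ)) * C ^ (-((d : ℝ) * δ)) * exp (k * d * δ * (θ * γ - log 2))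
      = κ₁ * ((1 / 2) ^ (-(γ * δ)) * exp (-(-(k : ℝ) * θ * d * (γ * δ)))) *
          (C ^ (-((d : ℝ) * δ)) * exp (-(k * log 2 * (d * δ)))) := by
        rw [mul_assoc κ₁, mul_assoc κ₁, mul_assoc κ₁, mul_mul_mul_comm, ← exp_add]
        ring_nf
    _ ≤ κ₁ * v ^ (-(γ * δ)) * y ^ (-((d : ℝ) * δ)) := by
        gcongr
        · exact mul_exp_rpow_neg_le_rpow_neg hv₀ hv (by positivity)
        · exact mul_exp_rpow_neg_le_rpow_neg hy₀ hy (by positivity)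

end Layer

theorem connector_count_growth_general
    (d : ℕ) (hd : 1 ≤ d) (γ δ κ₁ θ ε₁ ε₃ : ℝ)
    (hγ : γ ∈ Set.Ioo (0 : ℝ) 1) (hδ : 1 < δ) (hκ₁ : 0 < κ₁)
    (hθ₁ : (ε₁ + Real.log 2) / (γ + γ / δ) < θ) (hθ₂ : θ < Real.log 2)
    (hε₃ : ε₃ ∈ Set.Ioo 0 (min (θ * γ) (δ * ε₁))) :
    ∃ c > 0, ∀ (k : ℕ) (u v r : ℝ),
      u ∈ Set.Ioo ((1 / 2) * Real.exp (-((k : ℝ) + 1) * θ * d))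
                  ((1 / 2) * Real.exp (-(k : ℝ) * θ * d)) →
      v ∈ Set.Ioo ((1 / 2) * Real.exp (-((k : ℝ) + 1) * θ * d))
                  ((1 / 2) * Real.exp (-(k : ℝ) * θ * d)) →
      r ∈ Set.Icc 0 (Real.sqrt d * 2 ^ (k + 1)) →
      Real.exp ((k : ℝ) * d * (min (θ * γ) (δ * ε₁) - ε₃)) * u ^ (-γ) *
          min 1 (κ₁ * v ^ (-(γ * δ)) * (r + u ^ (-(γ / (d : ℝ)))) ^ (-((d : ℝ) * δ)))
        ≥ c * Real.exp ((k : ℝ) * d * ε₃) := by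
  obtain ⟨hγ₀, hγ₁⟩ := hγ
  have hδ₀ : 0 < δ := one_pos.trans hδ
  have hθγ : θ * γ ≤ log 2 := by nlinarith [log_pos one_lt_two]
  have hgap : ε₃ ≤ min (θ * γ) (δ * ε₁) - ε₃ + θ * γ + δ * (θ * γ - log 2) := by
    linarith [hε₃.2, min_le_right (θ * γ) (δ * ε₁), ultrasmall_exponent hγ₀ hδ₀ hθ₁]
  set B := κ₁ * (1 / 2) ^ (-(γ * δ)) * (2 * √d + 4) ^ (-((d : ℝ) * δ))
  refine ⟨(1 / 2) ^ (-γ) * min 1 B, by positivity, ?_⟩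
  rintro k u v r ⟨hu₁, hu₂⟩ ⟨hv₁, hv₂⟩ ⟨hr₀, hr⟩
  have hu₀ : 0 < u := lt_trans (by positivity) hu₁
  have hv₀ : 0 < v := lt_trans (by positivity) hv₁
  have hy : r + u ^ (-(γ / d)) ≤ (2 * √d + 4) * exp (k * log 2) := by
    have := rpow_neg_div_le_of_mem_layer hd hγ₀.le hγ₁.le hθγ hu₁.le
    rw [pow_succ, two_pow_eq_exp] at hr
    linarith
  have hU := mul_exp_rpow_neg_le_rpow_neg hu₀ hu₂.le hγ₀.le
  have hP := min_one_mul_exp_le_of_mem_layer hγ₀.le hδ₀.le hκ₁ hθγ hv₀ hv₂.le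
    (add_pos_of_nonneg_of_pos hr₀ (rpow_pos_of_pos hu₀ _)) hy
  calc (1 / 2) ^ (-γ) * min 1 B * exp (k * d * ε₃)
      ≤ (1 / 2) ^ (-γ) * min 1 B * exp (k * d * (min (θ * γ) (δ * ε₁) - ε₃) +
          -(-(k : ℝ) * θ * d * γ) + k * d * δ * (θ * γ - log 2)) := by
        gcongr
        linarith [mul_le_mul_of_nonneg_left hgap (by positivity : (0 : ℝ) ≤ k * d)]
    _ = exp (k * d * (min (θ * γ) (δ * ε₁) - ε₃)) *
          ((1 / 2) ^ (-γ) * exp (-(-(k : ℝ) * θ * d * γ))) *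
          (min 1 B * exp (k * d * δ * (θ * γ - log 2))) := by
        rw [exp_add, exp_add]
        ring
    _ ≤ _ := by
        have := rpow_pos_of_pos hu₀ (-γ)
        gcongr

/-- Key computation in the proof of Proposition 3.7: for marks `u, v` in the `k`-th layer
and distance `r ≤ √d·2^(k+1)`, the expected number of connectors, proportional to
`e^{kd(min(θγ,δε₁)-ε₃)} u^{-γ} min(1, κ₁ v^{-γδ}(r+u^{-γ/d})^{-dδ})`, is at least
`c·e^{kdε₃}` for a constant `c > 0`. -/
theorem connector_count_growth
    (d : ℕ) (hd : 1 ≤ d) (γ δ κ₁ θ ε₁ ε₃ : ℝ)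
    (hγ : γ ∈ Set.Ioo (0 : ℝ) 1) (hδ : 1 < δ) (hκ₁ : 0 < κ₁) (hε₁ : 0 < ε₁)
    (hθ₁ : (ε₁ + Real.log 2) / (γ + γ / δ) < θ) (hθ₂ : θ < Real.log 2)
    (hε₃ : ε₃ ∈ Set.Ioo 0 (min (θ * γ) (δ * ε₁))) :
    ∃ c > 0, ∀ (k : ℕ) (u v r : ℝ),
      u ∈ Set.Ioo ((1 / 2) * Real.exp (-((k : ℝ) + 1) * θ * d))
                  ((1 / 2) * Real.exp (-(k : ℝ) * θ * d)) →
      v ∈ Set.Ioo ((1 / 2) * Real.exp (-((k : ℝ) + 1) * θ * d))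
                  ((1 / 2) * Real.exp (-(k : ℝ) * θ * d)) →
      r ∈ Set.Icc 0 (Real.sqrt d * 2 ^ (k + 1)) →
      Real.exp ((k : ℝ) * d * (min (θ * γ) (δ * ε₁) - ε₃)) * u ^ (-γ) *
          min 1 (κ₁ * v ^ (-(γ * δ)) * (r + u ^ (-(γ / (d : ℝ)))) ^ (-((d : ℝ) * δ)))
        ≥ c * Real.exp ((k : ℝ) * d * ε₃) :=
  connector_count_growth_general d hd γ δ κ₁ θ ε₁ ε₃ hγ hδ hκ₁ hθ₁ hθ₂ hε₃
end

section
/- Let d ≥ 1 be an integer, ε ∈ (0,1), C' > 0, and c₀ ∈ (0, 1/(2 log 2)). For t > 1 set κ(t) = ⌈c₀ log t⌉, and define recursively ℓ₁(t) = ( ε t / (8 C' κ(t)³) )^{1/2} and ℓ_{j+1}(t) = ℓ_j(t) · ( 1/4 - ε/(8 κ(t)) )^{1/2} for 1 ≤ j < κ(t) (note 1/4 - ε/(8κ(t)) > 0 once t is large enough that κ(t) > ε/2). Then for every constant C > 0 there exists t₀ such that for all t ≥ t₀ one has ℓ_{κ(t)}(t)^d ≥ C (log t)³. -/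
/-! Write `q = 1/4 - ε/(8κ) = (1 - ε/(2κ))/4`, so that `ℓ_κ² = ε t q^(κ-1) / (8C'κ³)`.
Bernoulli's inequality gives `(1 - ε/(2κ))^(κ-1) ≥ 1 - ε/2`, and `κ - 1 ≤ c₀ log t` gives
`4^(κ-1) ≤ t^(c₀ log 4)`. Hence `ℓ_κ² ≳ t^(1 - c₀ log 4) / log³ t`, and the exponent
`1 - 2 c₀ log 2` is positive, so `ℓ_κ²` eventually beats any multiple of `log⁶ t`.
Finally `ℓ_κ ≥ 1` eventually, so `ℓ_κ^d ≥ ℓ_κ`. -/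

/-- The sequence of spatial scales from the proof of Proposition 3.4, zero-indexed:
`ellSeq ε C' κ t j` is `ℓ_{j+1}(t)`, where `ℓ₁(t) = (εt/(8C'κ³))^{1/2}` and
`ℓ_{j+1}(t) = ℓ_j(t)·(1/4 - ε/(8κ))^{1/2}`. -/
noncomputable def ellSeq (ε C' κ t : ℝ) : ℕ → ℝ
  | 0 => Real.sqrt (ε * t / (8 * C' * κ ^ 3))
  | j + 1 => ellSeq ε C' κ t j * Real.sqrt (1 / 4 - ε / (8 * κ))

open Real Filter

lemma ellSeq_nonneg (ε C' κ t : ℝ) (j : ℕ) : 0 ≤ ellSeq ε C' κ t j := by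
  induction j with
  | zero => exact sqrt_nonneg _
  | succ j ih => exact mul_nonneg ih (sqrt_nonneg _)

lemma ellSeq_sq {ε C' κ t : ℝ} (hA : 0 ≤ ε * t / (8 * C' * κ ^ 3))
    (hq : 0 ≤ 1 / 4 - ε / (8 * κ)) (j : ℕ) :
    ellSeq ε C' κ t j ^ 2 = ε * t / (8 * C' * κ ^ 3) * (1 / 4 - ε / (8 * κ)) ^ j := by
  induction j with
  | zero => simp [ellSeq, sq_sqrt hA]
  | succ j ih => rw [ellSeq, mul_pow, ih, sq_sqrt hq, mul_assoc, ← pow_succ]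

lemma one_sub_le_one_sub_div_pow_pred {n : ℕ} (hn : 0 < n) {x : ℝ} (hx₀ : 0 ≤ x)
    (hxn : x ≤ n) : 1 - x ≤ (1 - x / n) ^ (n - 1) := by
  have hn' : (0 : ℝ) < n := Nat.cast_pos.mpr hn
  have hxn' : x / n ≤ 1 := div_le_one_of_le₀ hxn hn'.le
  have hbase₀ : 0 ≤ 1 - x / n := sub_nonneg.mpr hxn'
  have hbase₁ : 1 - x / n ≤ 1 := sub_le_self _ (div_nonneg hx₀ hn'.le)
  calc 1 - x = 1 + n * -(x / n) := by field_simp; ring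
    _ ≤ (1 + -(x / n)) ^ n := one_add_mul_le_pow (by linarith) n
    _ = (1 - x / n) ^ n := by rw [sub_eq_add_neg]
    _ ≤ (1 - x / n) ^ (n - 1) := pow_le_pow_of_le_one hbase₀ hbase₁ (Nat.sub_le n 1)

lemma pow_le_rpow_mul_log {b t c : ℝ} (hb : 1 ≤ b) (ht : 0 < t) {n : ℕ}
    (hn : (n : ℝ) ≤ c * log t) : b ^ n ≤ t ^ (c * log b) := by
  rw [rpow_def_of_pos ht, ← exp_log (pow_pos (by linarith) n), log_pow]
  exact exp_le_exp.mpr (by nlinarith [log_nonneg hb])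

lemma eventually_mul_log_pow_le_rpow (c : ℝ) (k : ℕ) {β : ℝ} (hβ : 0 < β) :
    ∀ᶠ t in atTop, c * log t ^ k ≤ t ^ β := by
  filter_upwards [((isLittleO_log_rpow_rpow_atTop k hβ).const_mul_left c).eventuallyLE,
    eventually_ge_atTop 0] with t h ht
  simpa [rpow_natCast, abs_of_nonneg (rpow_nonneg ht β)] using (le_abs_self _).trans h

lemma rpow_div_le_sq_ellSeq_pred {ε C' c t : ℝ} (hε₀ : 0 ≤ ε) (hε₂ : ε ≤ 2) (hC' : 0 ≤ C')
    (ht : 0 < t) {κ : ℕ} (hκ : 0 < κ) (hκt : ((κ - 1 : ℕ) : ℝ) ≤ c * log t) :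
    ε * (1 - ε / 2) * t ^ (1 - c * log 4) / (8 * C' * κ ^ 3)
      ≤ ellSeq ε C' κ t (κ - 1) ^ 2 := by
  have hκ' : (1 : ℝ) ≤ κ := Nat.one_le_cast.mpr hκ
  have hA : 0 ≤ ε * t / (8 * C' * κ ^ 3) := by positivity
  have hq : 1 / 4 - ε / (8 * κ) = (1 - ε / 2 / κ) / 4 := by field_simp; ring
  have hq₀ : 0 ≤ 1 - ε / 2 / κ := sub_nonneg.mpr (div_le_one_of_le₀ (by linarith) (by linarith))
  have hbernoulli : 1 - ε / 2 ≤ (1 - ε / 2 / κ) ^ (κ - 1) :=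
    one_sub_le_one_sub_div_pow_pred hκ (by linarith) (by linarith)
  have hfour : (4 : ℝ) ^ (κ - 1) ≤ t ^ (c * log 4) := pow_le_rpow_mul_log (by norm_num) ht hκt
  rw [ellSeq_sq hA (hq ▸ div_nonneg hq₀ zero_le_four), hq, div_pow]
  calc ε * (1 - ε / 2) * t ^ (1 - c * log 4) / (8 * C' * κ ^ 3)
      = ε * t / (8 * C' * κ ^ 3) * ((1 - ε / 2) / t ^ (c * log 4)) := by
        rw [rpow_sub ht, rpow_one]; ring
    _ ≤ ε * t / (8 * C' * κ ^ 3) * ((1 - ε / 2 / κ) ^ (κ - 1) / 4 ^ (κ - 1)) := by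
        gcongr

lemma eventually_mul_log_pow_three_le_ellSeq {ε C' c : ℝ} (hε₀ : 0 < ε) (hε₂ : ε < 2)
    (hC' : 0 < C') (hc : 0 < c) (hc₄ : c * log 4 < 1) (M : ℝ) :
    ∀ᶠ t in atTop, M * log t ^ 3 ≤ ellSeq ε C' ⌈c * log t⌉₊ t (⌈c * log t⌉₊ - 1) := by
  set a := ε * (1 - ε / 2) / (8 * C')
  have ha : 0 < a := div_pos (mul_pos hε₀ (by linarith)) (by positivity)
  filter_upwards [eventually_mul_log_pow_le_rpow (M ^ 2 * (c + 1) ^ 3 / a) 9 (sub_pos.mpr hc₄),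
    tendsto_log_atTop.eventually_ge_atTop 1, eventually_gt_atTop 0] with t hpow hlog ht
  set L := log t
  set κ := ⌈c * L⌉₊
  have hκ : 0 < κ := Nat.one_le_ceil_iff.mpr (by positivity)
  have hκ_lt : (κ : ℝ) < c * L + 1 := Nat.ceil_lt_add_one (by positivity)
  have hκt : ((κ - 1 : ℕ) : ℝ) ≤ c * L := by rw [Nat.cast_sub hκ, Nat.cast_one]; linarith
  have hκL : (κ : ℝ) ≤ (c + 1) * L := by nlinarith
  refine le_of_sq_le_sq ?_ (ellSeq_nonneg _ _ _ _ _)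
  calc (M * L ^ 3) ^ 2 = M ^ 2 * (c + 1) ^ 3 / a * L ^ 9 * a / ((c + 1) * L) ^ 3 := by
        field_simp
    _ ≤ t ^ (1 - c * log 4) * a / ((c + 1) * L) ^ 3 := by gcongr
    _ ≤ t ^ (1 - c * log 4) * a / κ ^ 3 := by gcongr
    _ = ε * (1 - ε / 2) * t ^ (1 - c * log 4) / (8 * C' * κ ^ 3) := by ring
    _ ≤ ellSeq ε C' κ t (κ - 1) ^ 2 :=
        rpow_div_le_sq_ellSeq_pred hε₀.le hε₂.le hC'.le ht hκ hκt

/-- Scale-sequence estimate from the proof of Proposition 3.4: with `κ(t) = ⌈c₀ log t⌉`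
scales, the finest scale `ℓ_{κ(t)}(t)` still satisfies `ℓ_{κ(t)}(t)^d ≥ C (log t)³`
for any prescribed constant `C > 0`, provided `t` is large enough. -/
theorem finest_scale_lower_bound
    (d : ℕ) (hd : 1 ≤ d) (ε C' c₀ : ℝ)
    (hε : ε ∈ Set.Ioo (0 : ℝ) 1) (hC' : 0 < C')
    (hc₀ : c₀ ∈ Set.Ioo (0 : ℝ) (1 / (2 * Real.log 2))) :
    ∀ C > 0, ∃ t₀ : ℝ, ∀ t ≥ t₀,
      (ellSeq ε C' (⌈c₀ * Real.log t⌉₊ : ℝ) t (⌈c₀ * Real.log t⌉₊ - 1)) ^ d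
        ≥ C * (Real.log t) ^ 3 := by
  intro C _
  obtain ⟨hε₀, hε₁⟩ := hε
  obtain ⟨hc₀, hc₁⟩ := hc₀
  have hc₄ : c₀ * log 4 < 1 := by
    rw [show (4 : ℝ) = 2 ^ 2 by norm_num, log_pow, Nat.cast_ofNat]
    exact (lt_div_iff₀ (by positivity)).mp hc₁
  refine eventually_atTop.mp ?_
  filter_upwards [eventually_mul_log_pow_three_le_ellSeq hε₀ (by linarith) hC' hc₀ hc₄ (max C 1),
    tendsto_log_atTop.eventually_ge_atTop 1] with t hℓ hlog
  have hℓ₁ : 1 ≤ ellSeq ε C' ⌈c₀ * log t⌉₊ t (⌈c₀ * log t⌉₊ - 1) :=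
    (one_le_mul_of_one_le_of_one_le (le_max_right C 1) (one_le_pow₀ hlog)).trans hℓ
  calc C * log t ^ 3 ≤ max C 1 * log t ^ 3 := by gcongr; exact le_max_left C 1
    _ ≤ _ := hℓ
    _ ≤ _ := le_self_pow₀ hℓ₁ (by omega)
end
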